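/- arXiv:1509.04221 — 2 statements merged into one kernel-verified Lean document; each statement's English description precedes it below -/
import Mathlib

section
/- Let f ∈ R[x] be a polynomial whose coefficientwise reduction modulo the ideal ⟨u,v,w⟩ of R is a nonzero polynomial in F_p[x]. Then f is not a zero divisor in R[x], i.e., f·g = 0 with g ∈ R[x] implies g = 0. -/
open Polynomial

set_option synthInstance.maxHeartbeats 1000000

noncomputable section

/-- The ring `R = F_p[u,v,w]/⟨u², v², w²⟩`. -/
abbrev Rquot (p : ℕ) : Type :=
  MvPolynomial (Fin 3) (ZMod p) ⧸
    (Ideal.span {MvPolynomial.X 0 ^ 2, MvPolynomial.X 1 ^ 2, MvPolynomial.X 2 ^ 2} :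
      Ideal (MvPolynomial (Fin 3) (ZMod p)))

/-- The element `u` of `R`. -/
def uu (p : ℕ) : Rquot p := Ideal.Quotient.mk _ (MvPolynomial.X 0)

/-- The element `v` of `R`. -/
def vv (p : ℕ) : Rquot p := Ideal.Quotient.mk _ (MvPolynomial.X 1)

/-- The element `w` of `R`. -/
def ww (p : ℕ) : Rquot p := Ideal.Quotient.mk _ (MvPolynomial.X 2)

/-- The three X's as a set equal the image of X on univ. -/
lemma aux_X_set (p : ℕ) :
    ({MvPolynomial.X 0, MvPolynomial.X 1, MvPolynomial.X 2} :
      Set (MvPolynomial (Fin 3) (ZMod p))) = MvPolynomial.X '' Set.univ := by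
  ext P
  simp only [Set.image_univ, Set.mem_insert_iff, Set.mem_singleton_iff, Set.mem_range]
  constructor
  · rintro (rfl | rfl | rfl)
    exacts [⟨0, rfl⟩, ⟨1, rfl⟩, ⟨2, rfl⟩]
  · rintro ⟨i, rfl⟩
    fin_cases i <;> simp

/-- Every element of `Rquot p` is congruent mod `⟨u,v,w⟩` to a scalar. -/
lemma aux_scalar (p : ℕ) (c : Rquot p) :
    ∃ α : ZMod p, c - algebraMap (ZMod p) (Rquot p) α ∈
      Ideal.span {uu p, vv p, ww p} := by
  obtain ⟨P, rfl⟩ := Ideal.Quotient.mk_surjective c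
  refine ⟨MvPolynomial.constantCoeff P, ?_⟩
  have h1 : (Ideal.Quotient.mk _ P : Rquot p) - algebraMap (ZMod p) (Rquot p)
      (MvPolynomial.constantCoeff P)
      = Ideal.Quotient.mk _ (P - MvPolynomial.C (MvPolynomial.constantCoeff P)) := by
    simp [map_sub]
    rfl
  rw [h1]
  have h2 : P - MvPolynomial.C (MvPolynomial.constantCoeff P) ∈
      Ideal.span ({MvPolynomial.X 0, MvPolynomial.X 1, MvPolynomial.X 2} :
        Set (MvPolynomial (Fin 3) (ZMod p))) := by
    rw [aux_X_set p, MvPolynomial.mem_ideal_span_X_image]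
    intro m hm
    rw [MvPolynomial.mem_support_iff] at hm
    by_cases hm0 : m = 0
    · exfalso
      apply hm
      simp [hm0, MvPolynomial.coeff_sub, MvPolynomial.constantCoeff_eq]
    · obtain ⟨i, hi⟩ : ∃ i, m i ≠ 0 := by
        by_contra h
        push_neg at h
        exact hm0 (Finsupp.ext fun i => h i)
      exact ⟨i, Set.mem_univ i, hi⟩
  have : Ideal.span ({uu p, vv p, ww p} : Set (Rquot p)) =
      Ideal.map (Ideal.Quotient.mk _)
        (Ideal.span ({MvPolynomial.X 0, MvPolynomial.X 1, MvPolynomial.X 2} :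
          Set (MvPolynomial (Fin 3) (ZMod p)))) := by
    rw [Ideal.map_span]
    congr 1
    simp [Set.image_insert_eq, uu, vv, ww]
  rw [this]
  exact Ideal.mem_map_of_mem _ h2

/-- Every element of the ideal `⟨u,v,w⟩` is nilpotent. -/
lemma aux_nilpotent (p : ℕ) (m : Rquot p) (hm : m ∈ Ideal.span {uu p, vv p, ww p}) :
    IsNilpotent m := by
  have h : Ideal.span ({uu p, vv p, ww p} : Set (Rquot p)) ≤ nilradical (Rquot p) := by
    rw [Ideal.span_le]
    rintro x (rfl | rfl | rfl) <;>
    · refine mem_nilradical.mpr ⟨2, ?_⟩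
      simp only [uu, vv, ww]
      rw [← map_pow, Ideal.Quotient.eq_zero_iff_mem]
      apply Ideal.subset_span
      simp
  exact h hm

/-- A polynomial over `R` whose coefficientwise reduction modulo `⟨u,v,w⟩` is nonzero is
not a zero divisor in `R[x]`. -/
theorem stmt1 (p : ℕ) [Fact p.Prime] (f : Polynomial (Rquot p))
    (hf : f.map (Ideal.Quotient.mk (Ideal.span {uu p, vv p, ww p})) ≠ 0) :
    ∀ g : Polynomial (Rquot p), f * g = 0 → g = 0 := by
  intro g hfg
  by_contra hg
  -- f is not a non-zero-divisor
  have hfnd : f ∉ nonZeroDivisors (Polynomial (Rquot p)) := by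
    intro hmem
    exact hg ((mem_nonZeroDivisors_iff_left (M₀ := Polynomial (Rquot p))).mp hmem g hfg)
  obtain ⟨a, ha, haf⟩ := Polynomial.notMem_nonZeroDivisors_iff.mp hfnd
  -- find a coefficient of f outside the ideal
  obtain ⟨n, hn⟩ : ∃ n, f.coeff n ∉ Ideal.span {uu p, vv p, ww p} := by
    by_contra h
    push_neg at h
    apply hf
    ext n
    simp [Polynomial.coeff_map, Ideal.Quotient.eq_zero_iff_mem.mpr (h n)]
  set c := f.coeff n with hc
  -- c is a unit
  obtain ⟨α, hα⟩ := aux_scalar p c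
  have hα0 : α ≠ 0 := by
    rintro rfl
    apply hn
    simpa using hα
  have hunit : IsUnit c := by
    have h1 : IsUnit (algebraMap (ZMod p) (Rquot p) α) :=
      (isUnit_iff_ne_zero.mpr hα0).map _
    have h2 : IsNilpotent (c - algebraMap (ZMod p) (Rquot p) α) :=
      aux_nilpotent p _ hα
    have := h2.isUnit_add_right_of_commute h1 (Commute.all _ _)
    simpa using this
  -- a • f = 0 gives a * c = 0
  have hac : a * c = 0 := by
    have := congrArg (fun q => Polynomial.coeff q n) haf
    simpa [Polynomial.coeff_smul, smul_eq_mul] using this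
  exact ha (by
    obtain ⟨cu, hcu⟩ := hunit
    have := congrArg (fun x => x * (↑cu⁻¹ : Rquot p)) hac
    simpa [← hcu, mul_assoc] using this)

end
end

section
/- If C is a linear code over R of length n (an R-submodule of Rⁿ) with |C| = p^k and minimum Lee weight d (the least Lee weight of a nonzero codeword), then φ_L(C) is an F_p-linear subspace of F_p^{8n} of dimension k whose minimum Hamming weight (least number of nonzero entries of a nonzero element) is d. -/
/-!
The Gray map `φ_L` is an `F_p`-linear bijection `R → F_p⁸`. Indeed, the eight monomials
`u^a v^b w^c` span `R` over `F_p`, since multiplying a monomial by `u`, `v` or `w` gives another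
monomial or `0`; and the Gray transform of a coefficient vector is invertible. Applied
coordinatewise, `φ_L` therefore maps `C` bijectively and `F_p`-linearly onto its image, which
thus has `p^k` elements, i.e. dimension `k`, and whose nonzero words have exactly the Lee weights
of the nonzero codewords of `C`.
-/

open Polynomial

set_option synthInstance.maxHeartbeats 1000000

noncomputable section

/-- The monomials `1, u, v, uv, w, uw, vw, uvw` of `R`. -/
def mons (p : ℕ) : Fin 8 → Rquot p :=
  ![1, uu p, vv p, uu p * vv p, ww p, uu p * ww p, vv p * ww p, uu p * vv p * ww p]

/-- The Gray image of the coordinate vector `(α₁, …, α₈)` (indexed by `0, …, 7`). -/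
def grayVec (p : ℕ) (α : Fin 8 → ZMod p) : Fin 8 → ZMod p :=
  ![α 7, α 5 + α 7, α 6 + α 7, α 3 + α 7, α 4 + α 5 + α 6 + α 7,
    α 1 + α 3 + α 5 + α 7, α 2 + α 3 + α 6 + α 7,
    α 0 + α 1 + α 2 + α 3 + α 4 + α 5 + α 6 + α 7]

/-- `α₁ + uα₂ + vα₃ + uvα₄ + wα₅ + uwα₆ + vwα₇ + uvwα₈ ∈ R`. -/
def combo (p : ℕ) (α : Fin 8 → ZMod p) : Rquot p :=
  ∑ j : Fin 8, α j • mons p j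

/-- Hamming weight (number of nonzero entries) of an element of `(F_p⁸)ⁿ`. -/
def hamWt {n : ℕ} {p : ℕ} (x : Fin n → Fin 8 → ZMod p) : ℕ :=
  Set.ncard {ij : Fin n × Fin 8 | x ij.1 ij.2 ≠ 0}

section GrayMap

variable {p : ℕ}

lemma mk_X_sq (i : Fin 3) :
    (Ideal.Quotient.mk _ (MvPolynomial.X i) : Rquot p) ^ 2 = 0 := by
  rw [← map_pow, Ideal.Quotient.eq_zero_iff_mem]
  exact Ideal.subset_span (by fin_cases i <;> simp)

lemma uu_sq : uu p ^ 2 = 0 := mk_X_sq 0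

lemma vv_sq : vv p ^ 2 = 0 := mk_X_sq 1

lemma ww_sq : ww p ^ 2 = 0 := mk_X_sq 2

lemma mk_X_eq (i : Fin 3) :
    (Ideal.Quotient.mk _ (MvPolynomial.X i) : Rquot p) = ![uu p, vv p, ww p] i := by
  fin_cases i <;> rfl

/-- Indexing the monomials by `j = a + 2b + 4c` for `u^a v^b w^c`, multiplying by the `i`-th
generator either kills a monomial or raises its `i`-th exponent, which adds `2^i` to `j`. -/
lemma gen_mul_mons (i : Fin 3) (j : Fin 8) :
    ![uu p, vv p, ww p] i * mons p j = 0 ∨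
      ![uu p, vv p, ww p] i * mons p j = mons p (j + ![1, 2, 4] i) := by
  fin_cases i <;> fin_cases j <;>
    simp only [mons, Fin.reduceFinMk, Fin.reduceAdd, Matrix.cons_val, Fin.zero_eta, Fin.isValue,
      Fin.mk_one, or_true]
  all_goals first
    | (right; ring1)
    | (left; ring_nf; simp only [uu_sq, vv_sq, ww_sq, zero_mul])

lemma Submodule.mul_mem_span_of_forall_mul_mem {R A : Type*} [CommSemiring R] [Semiring A]
    [Algebra R A] {s : Set A} {a x : A} (h : ∀ y ∈ s, a * y ∈ Submodule.span R s)
    (hx : x ∈ Submodule.span R s) : a * x ∈ Submodule.span R s :=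
  (Submodule.span_le (p := (Submodule.span R s).comap (LinearMap.mulLeft R a))).2 h hx

lemma span_range_mons : Submodule.span (ZMod p) (Set.range (mons p)) = ⊤ := by
  refine eq_top_iff.2 ?_
  rintro x -
  obtain ⟨f, rfl⟩ := Ideal.Quotient.mk_surjective x
  induction f using MvPolynomial.induction_on with
  | C a =>
    rw [← MvPolynomial.algebraMap_eq, Ideal.Quotient.mk_algebraMap, Algebra.algebraMap_eq_smul_one]
    exact Submodule.smul_mem _ a (Submodule.subset_span (Set.mem_range_self (f := mons p) 0))
  | add f g hf hg => rw [map_add]; exact add_mem hf hg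
  | mul_X f i hf =>
    rw [map_mul, mul_comm, mk_X_eq]
    refine Submodule.mul_mem_span_of_forall_mul_mem ?_ hf
    rintro _ ⟨j, rfl⟩
    rcases gen_mul_mons i j with h | h <;> rw [h]
    exacts [zero_mem _, Submodule.subset_span ⟨_, rfl⟩]

lemma combo_surjective : Function.Surjective (combo p) := fun _ =>
  (Submodule.mem_span_range_iff_exists_fun _).1 (span_range_mons ▸ Submodule.mem_top)

/-- The coefficients are the rows of the inverse of the Gray matrix. -/
lemma eq_zero_of_grayVec_eq_zero {α : Fin 8 → ZMod p} (h : grayVec p α = 0) : α = 0 := by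
  have h0 : α 7 = 0 := congrFun h 0
  have h1 : α 5 + α 7 = 0 := congrFun h 1
  have h2 : α 6 + α 7 = 0 := congrFun h 2
  have h3 : α 3 + α 7 = 0 := congrFun h 3
  have h4 : α 4 + α 5 + α 6 + α 7 = 0 := congrFun h 4
  have h5 : α 1 + α 3 + α 5 + α 7 = 0 := congrFun h 5
  have h6 : α 2 + α 3 + α 6 + α 7 = 0 := congrFun h 6
  have h7 : α 0 + α 1 + α 2 + α 3 + α 4 + α 5 + α 6 + α 7 = 0 := congrFun h 7
  funext j
  fin_cases j <;> simp only [Fin.zero_eta, Fin.mk_one, Fin.reduceFinMk, Pi.zero_apply]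
  · linear_combination h7 - h4 - h5 - h6 + h3 + h1 + h2 - h0
  · linear_combination h5 - h3 - h1 + h0
  · linear_combination h6 - h3 - h2 + h0
  · linear_combination h3 - h0
  · linear_combination h4 - h1 - h2 + h0
  · linear_combination h1 - h0
  · linear_combination h2 - h0
  · linear_combination h0

lemma injective_of_apply_combo (φ : Rquot p →ₗ[ZMod p] (Fin 8 → ZMod p))
    (hφ : ∀ α, φ (combo p α) = grayVec p α) : Function.Injective φ := by
  refine (injective_iff_map_eq_zero φ).2 fun x hx => ?_
  obtain ⟨α, rfl⟩ := combo_surjective x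
  rw [hφ] at hx
  simp [eq_zero_of_grayVec_eq_zero hx, combo]

end GrayMap

lemma Module.finrank_eq_of_natCard_eq_pow {K V : Type*} [Field K] [Finite K] [AddCommGroup V]
    [Module K V] [Module.Finite K V] {k : ℕ} (h : Nat.card V = Nat.card K ^ k) :
    Module.finrank K V = k :=
  Nat.pow_right_injective Finite.one_lt_card (Module.natCard_eq_pow_finrank.symm.trans h)

lemma setOf_exists_mem_image_ne_zero {α β γ : Type*} [Zero α] [Zero β] {f : α → β}
    (hf : Function.Injective f) (hf0 : f 0 = 0) (s : Set α) (w : β → γ) :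
    {m | ∃ y ∈ f '' s, y ≠ 0 ∧ w y = m} = {m | ∃ x ∈ s, x ≠ 0 ∧ w (f x) = m} := by
  ext m
  simp [hf.ne_iff' hf0]

theorem stmt3_general (p : ℕ) [Fact p.Prime] (n k d : ℕ)
    (φ : Rquot p →ₗ[ZMod p] (Fin 8 → ZMod p))
    (hφ : ∀ α : Fin 8 → ZMod p, φ (combo p α) = grayVec p α)
    (C : Submodule (Rquot p) (Fin n → Rquot p))
    (hcard : Nat.card C = p ^ k)
    (hd : IsLeast {m | ∃ c ∈ C, c ≠ (0 : Fin n → Rquot p) ∧ hamWt (fun i => φ (c i)) = m} d) :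
    ∃ V : Submodule (ZMod p) (Fin n → Fin 8 → ZMod p),
      (V : Set (Fin n → Fin 8 → ZMod p)) = (fun c : Fin n → Rquot p => fun i => φ (c i)) '' C ∧
      Module.finrank (ZMod p) V = k ∧
      IsLeast {m | ∃ x ∈ V, x ≠ 0 ∧ hamWt x = m} d := by
  let Φ := φ.compLeft (Fin n)
  have hΦ : Function.Injective Φ := (injective_of_apply_combo φ hφ).comp_left
  let V := (C.restrictScalars (ZMod p)).map Φ
  have hV : (V : Set (Fin n → Fin 8 → ZMod p)) = Φ '' C := by
    rw [Submodule.map_coe, Submodule.coe_restrictScalars]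
  refine ⟨V, hV, Module.finrank_eq_of_natCard_eq_pow ?_, ?_⟩
  · rw [Nat.card_zmod, ← hcard]
    exact (Nat.card_congr (Equiv.setCongr hV)).trans (Nat.card_image_of_injective hΦ _)
  · convert hd using 1
    simp_rw [← SetLike.mem_coe, hV]
    exact setOf_exists_mem_image_ne_zero hΦ (map_zero Φ) C hamWt

/-- If `C` is a linear code of length `n` over `R` with `p^k` elements and minimum Lee
weight `d`, then its Gray image is an `F_p`-linear code of length `8n`, dimension `k`
and minimum Hamming weight `d`. -/
theorem stmt3 (p : ℕ) [Fact p.Prime] (n k d : ℕ) (hn : 0 < n)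
    (φ : Rquot p →ₗ[ZMod p] (Fin 8 → ZMod p))
    (hφ : ∀ α : Fin 8 → ZMod p, φ (combo p α) = grayVec p α)
    (C : Submodule (Rquot p) (Fin n → Rquot p))
    (hcard : Nat.card C = p ^ k)
    (hd : IsLeast {m | ∃ c ∈ C, c ≠ (0 : Fin n → Rquot p) ∧ hamWt (fun i => φ (c i)) = m} d) :
    ∃ V : Submodule (ZMod p) (Fin n → Fin 8 → ZMod p),
      (V : Set (Fin n → Fin 8 → ZMod p)) = (fun c : Fin n → Rquot p => fun i => φ (c i)) '' C ∧
      Module.finrank (ZMod p) V = k ∧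
      IsLeast {m | ∃ x ∈ V, x ≠ 0 ∧ hamWt x = m} d :=
  stmt3_general p n k d φ hφ C hcard hd

end
end
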